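/- arXiv:1402.0530 — 5 statements merged into one kernel-verified Lean document; each statement's English description precedes it below -/
import Mathlib

section
/- Let d ≥ 1, θ ∈ ℝ, a > 0, let J : ℝ → ℝ be such that y ↦ J(‖x − y‖) is integrable on E for every x ∈ E, let I : ℝ → ℝ, and let f be the Heaviside firing rate at threshold θ. Define U : E → ℝ by U(x) = ∫_{B(0,a)} J(‖x − y‖) dy + I(‖x‖). If U(x) > θ whenever ‖x‖ < a and U(x) < θ whenever ‖x‖ > a, then U solves the stationary neural field equation: U(x) = ∫_E J(‖x − y‖) f(U(y)) dy + I(‖x‖) for all x ∈ E. In other words, any a > 0 for which the explicit profile crosses the threshold exactly at radius a yields a stationary pulse. -/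
open MeasureTheory Metric

/-! The sphere of radius `a` is Lebesgue-null, and off it the hypotheses force `f (U y)` to be
the indicator of the ball `B(0, a)`; so the firing-rate integral collapses to the integral of
the kernel over that ball, which is how `U` was defined. -/

section

variable {E : Type*} [NormedAddCommGroup E] [NormedSpace ℝ E] [MeasurableSpace E] [BorelSpace E]
  [FiniteDimensional ℝ E] (μ : Measure E) [μ.IsAddHaarMeasure]

theorem ae_norm_ne {a : ℝ} (ha : a ≠ 0) : ∀ᵐ y ∂μ, ‖y‖ ≠ a := by
  refine measure_mono_null (fun y hy => ?_) (Measure.addHaar_sphere_of_ne_zero μ 0 ha)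
  simpa using hy

theorem integral_mul_comp_eq_setIntegral_ball {θ a : ℝ} (ha : a ≠ 0) {f : ℝ → ℝ}
    (hf_above : ∀ u, θ < u → f u = 1) (hf_below : ∀ u, u < θ → f u = 0) {U g : E → ℝ}
    (hgt : ∀ y, ‖y‖ < a → θ < U y) (hlt : ∀ y, a < ‖y‖ → U y < θ) :
    ∫ y, g y * f (U y) ∂μ = ∫ y in ball 0 a, g y ∂μ := by
  rw [← integral_indicator measurableSet_ball]
  refine integral_congr_ae ?_
  filter_upwards [ae_norm_ne μ ha] with y hy
  rcases hy.lt_or_gt with hin | hout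
  · have hmem : y ∈ ball (0 : E) a := by simpa using hin
    simp [hf_above _ (hgt y hin), Set.indicator_of_mem hmem]
  · have hmem : y ∉ ball (0 : E) a := by simpa using hout.le
    simp [hf_below _ (hlt y hout), Set.indicator_of_notMem hmem]

end

theorem explicit_profile_is_stationary_pulse_general
    (d : ℕ) (θ a : ℝ) (ha : 0 < a) (J I : ℝ → ℝ) (f : ℝ → ℝ)
    (hf : ∀ u, f u = if θ ≤ u then 1 else 0)
    (U : EuclideanSpace ℝ (Fin d) → ℝ)
    (hUdef : ∀ x : EuclideanSpace ℝ (Fin d),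
      U x = (∫ y in Metric.ball (0 : EuclideanSpace ℝ (Fin d)) a, J ‖x - y‖) + I ‖x‖)
    (hgt : ∀ x : EuclideanSpace ℝ (Fin d), ‖x‖ < a → θ < U x)
    (hlt : ∀ x : EuclideanSpace ℝ (Fin d), a < ‖x‖ → U x < θ) :
    ∀ x : EuclideanSpace ℝ (Fin d),
      U x = (∫ y, J ‖x - y‖ * f (U y)) + I ‖x‖ := by
  intro x
  have hf_above : ∀ u, θ < u → f u = 1 := fun u hu => by simp [hf, hu.le]
  have hf_below : ∀ u, u < θ → f u = 0 := fun u hu => by simp [hf, hu]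
  rw [hUdef x, integral_mul_comp_eq_setIntegral_ball volume ha.ne' hf_above hf_below hgt hlt]

/-- Conversely, if the explicit profile `U(x) = ∫_{B(0,a)} J(‖x − y‖) dy + I(‖x‖)`
crosses the threshold `θ` exactly at radius `a` (above threshold inside the ball of
radius `a`, below outside the closed ball), then it solves the stationary neural field
equation with the Heaviside firing rate `f` at threshold `θ`. -/
theorem explicit_profile_is_stationary_pulse
    (d : ℕ) (hd : 1 ≤ d) (θ a : ℝ) (ha : 0 < a) (J I : ℝ → ℝ) (f : ℝ → ℝ)
    (hf : ∀ u, f u = if θ ≤ u then 1 else 0)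
    (hJ : ∀ x : EuclideanSpace ℝ (Fin d), Integrable (fun y => J ‖x - y‖))
    (U : EuclideanSpace ℝ (Fin d) → ℝ)
    (hUdef : ∀ x : EuclideanSpace ℝ (Fin d),
      U x = (∫ y in Metric.ball (0 : EuclideanSpace ℝ (Fin d)) a, J ‖x - y‖) + I ‖x‖)
    (hgt : ∀ x : EuclideanSpace ℝ (Fin d), ‖x‖ < a → θ < U x)
    (hlt : ∀ x : EuclideanSpace ℝ (Fin d), a < ‖x‖ → U x < θ) :
    ∀ x : EuclideanSpace ℝ (Fin d),
      U x = (∫ y, J ‖x - y‖ * f (U y)) + I ‖x‖ :=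
  explicit_profile_is_stationary_pulse_general d θ a ha J I f hf U hUdef hgt hlt
end

section
/- Let J : ℝ → ℝ be integrable on compact intervals, let I : ℝ → ℝ be continuous, let θ ∈ ℝ and a > 0, and define U : ℝ → ℝ by U(x) = ∫_{−a}^{a} J(|x − y|) dy + I(|x|). If U is continuous, U(x) > θ for |x| < a and U(x) < θ for |x| > a, then the pulse half-width a satisfies the threshold relation θ = ∫_0^{2a} J(u) du + I(a). In particular, if I(r) = I₀ e^{−r²/σ²} with σ > 0, then I₀ = e^{a²/σ²} (θ − ∫_0^{2a} J(u) du). -/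
open MeasureTheory intervalIntegral

/-- One-dimensional stationary pulse condition: if the continuous profile
`U(x) = ∫_{−a}^{a} J(|x − y|) dy + I(|x|)` is above threshold `θ` for `|x| < a` and
below for `|x| > a`, then `θ = ∫_0^{2a} J(u) du + I(a)`; in particular for a Gaussian
input `I(r) = I₀ e^{−r²/σ²}` one gets `I₀ = e^{a²/σ²} (θ − ∫_0^{2a} J(u) du)`. -/
theorem one_dimensional_pulse_threshold_relation
    (J I : ℝ → ℝ) (θ a : ℝ) (ha : 0 < a)
    (hJ : ∀ r s : ℝ, IntervalIntegrable J volume r s)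
    (hI : Continuous I)
    (U : ℝ → ℝ)
    (hUdef : ∀ x : ℝ, U x = (∫ y in (-a)..a, J |x - y|) + I |x|)
    (hUc : Continuous U)
    (hgt : ∀ x : ℝ, |x| < a → θ < U x)
    (hlt : ∀ x : ℝ, a < |x| → U x < θ) :
    (θ = (∫ u in (0:ℝ)..(2*a), J u) + I a) ∧
    (∀ I₀ σ : ℝ, 0 < σ → (∀ r, I r = I₀ * Real.exp (-(r^2)/σ^2)) →
      I₀ = Real.exp (a^2/σ^2) * (θ - ∫ u in (0:ℝ)..(2*a), J u)) := by
  have hna : -a < a := by linarith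
  -- U a = θ
  have hle : θ ≤ U a := by
    have htend : Filter.Tendsto U (nhdsWithin a (Set.Ioo (-a) a)) (nhds (U a)) :=
      (hUc.continuousAt.continuousWithinAt).tendsto
    have hne : (nhdsWithin a (Set.Ioo (-a) a)).NeBot := by
      apply mem_closure_iff_nhdsWithin_neBot.mp
      rw [closure_Ioo (by linarith : -a ≠ a)]
      exact ⟨le_of_lt hna, le_refl a⟩
    refine ge_of_tendsto htend ?_
    filter_upwards [self_mem_nhdsWithin] with x hx
    exact le_of_lt (hgt x (abs_lt.mpr ⟨hx.1, hx.2⟩))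
  have hge : U a ≤ θ := by
    have htend : Filter.Tendsto U (nhdsWithin a (Set.Ioi a)) (nhds (U a)) :=
      (hUc.continuousAt.continuousWithinAt).tendsto
    refine le_of_tendsto htend ?_
    filter_upwards [self_mem_nhdsWithin] with x hx
    have : a < |x| := lt_of_lt_of_le hx (le_abs_self x)
    exact le_of_lt (hlt x this)
  have hUa : U a = θ := le_antisymm hge hle
  -- change of variables
  have hcov : (∫ y in (-a)..a, J |a - y|) = ∫ u in (0:ℝ)..(2*a), J u := by
    have h1 : (∫ y in (-a)..a, J |a - y|) = ∫ y in (-a)..a, J (a - y) := by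
      apply intervalIntegral.integral_congr
      intro y hy
      rw [Set.uIcc_of_le (le_of_lt hna)] at hy
      show J |a - y| = J (a - y)
      rw [abs_of_nonneg (by linarith [hy.2] : (0:ℝ) ≤ a - y)]
    rw [h1, intervalIntegral.integral_comp_sub_left J a]
    norm_num [two_mul]
  have key : θ = (∫ u in (0:ℝ)..(2*a), J u) + I a := by
    have := hUdef a
    rw [hUa, hcov, abs_of_pos ha] at this
    exact this
  refine ⟨key, ?_⟩
  intro I₀ σ hσ hIr
  have hIa := hIr a
  have : θ - (∫ u in (0:ℝ)..(2*a), J u) = I₀ * Real.exp (-(a^2)/σ^2) := by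
    rw [← hIa]; linarith [key]
  rw [this, ← mul_assoc, mul_comm (Real.exp (a^2/σ^2)) I₀, mul_assoc,
    ← Real.exp_add]
  have : a^2/σ^2 + -(a^2)/σ^2 = 0 := by ring
  rw [this, Real.exp_zero, mul_one]
end

section
/- Let J : ℝ → ℝ, a > 0, c > 0, τ_D ∈ ℝ, m > 0 a real number, λ ∈ ℂ, and let ε ∈ {1, −1}. Set F = e^{λ τ_D}(λ + 1)·m and define p : ℝ → ℂ by p(x) = J(|x − a|) e^{−λ|x−a|/c} + ε · J(|x + a|) e^{−λ|x+a|/c}. Assume the characteristic equation F = J(0) + ε J(2a) e^{−2λa/c} holds. Then: (i) p(a) = F and p(−a) = ε F; (ii) for every x ∈ ℝ, F · p(x) = J(|x − a|) e^{−λ|x−a|/c} · p(a) + J(|x + a|) e^{−λ|x+a|/c} · p(−a); i.e. p is an eigenfunction of the linearized operator around the one-dimensional pulse satisfying the dispersion relationship for the eigenvalue λ. -/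
/-- If the characteristic equation `F = J(0) + ε J(2a) e^{−2λa/c}` holds, where
`F = e^{λτ_D}(λ+1)m` and `ε = ±1`, then the function
`p(x) = J(|x−a|) e^{−λ|x−a|/c} + ε J(|x+a|) e^{−λ|x+a|/c}` satisfies `p(a) = F`,
`p(−a) = εF`, and the full dispersion relationship
`F p(x) = J(|x−a|) e^{−λ|x−a|/c} p(a) + J(|x+a|) e^{−λ|x+a|/c} p(−a)` for all `x`. -/
theorem eigenfunction_of_dispersion_relationship
    (J : ℝ → ℝ) (a c τD m : ℝ) (ha : 0 < a) (hc : 0 < c) (hm : 0 < m)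
    (lam ε : ℂ) (hε : ε = 1 ∨ ε = -1)
    (F : ℂ) (hF : F = Complex.exp (lam * τD) * (lam + 1) * m)
    (p : ℝ → ℂ)
    (hp : ∀ x : ℝ, p x = (J |x - a| : ℂ) * Complex.exp (-lam * |x - a| / c) +
      ε * (J |x + a| : ℂ) * Complex.exp (-lam * |x + a| / c))
    (hchar : F = (J 0 : ℂ) + ε * (J (2*a) : ℂ) * Complex.exp (-2 * lam * a / c)) :
    p a = F ∧ p (-a) = ε * F ∧
    ∀ x : ℝ, F * p x =
      (J |x - a| : ℂ) * Complex.exp (-lam * |x - a| / c) * p a +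
      (J |x + a| : ℂ) * Complex.exp (-lam * |x + a| / c) * p (-a) := by
  have h0 : |a - a| = 0 := by simp
  have h2 : |a + a| = 2 * a := by rw [abs_of_pos (by linarith)]; ring
  have h2' : |-a - a| = 2 * a := by rw [abs_of_nonpos (by linarith)]; ring
  have h0' : |-a + a| = 0 := by simp
  have harg : -lam * (2 * a : ℝ) / c = -2 * lam * a / c := by push_cast; ring
  have hpa : p a = F := by
    rw [hp a, h0, h2, harg, hchar]
    push_cast; simp
  have hε2 : ε * ε = 1 := by rcases hε with h | h <;> simp [h]
  have hpna : p (-a) = ε * F := by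
    rw [hp (-a), h2', h0', harg, hchar]
    push_cast; simp [mul_add]
    rcases hε with h | h <;> simp [h] <;> ring
  refine ⟨hpa, hpna, fun x => ?_⟩
  rw [hp x, hpa, hpna]
  ring
end

section
/- Let K be a real number. There exist a real ω > 0 and a real τ ≥ 0 such that (1 + iω) e^{iωτ} = K if and only if |K| > 1. Thus the delayed characteristic equation (λ+1)e^{λτ} = K admits a purely imaginary root (Hopf bifurcation) for some nonnegative delay τ exactly when |K| > 1. -/
/-!
Since `‖exp (i ω τ)‖ = 1`, the modulus of `(1 + i ω) e^{i ω τ}` is `√(1 + ω²)`, which exceeds `1`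
exactly when `ω ≠ 0`; so a real value `K` forces `|K| > 1`. Conversely, for `|K| > 1` the frequency
`ω = √(K² - 1)` makes `|1 + i ω| = |K|`, and as `τ` runs over `[0, ∞)` the factor `e^{i ω τ}` sweeps
the whole unit circle, so it can rotate `1 + i ω` onto `K`.
-/

open Complex

lemma norm_one_add_I_mul_ofReal (ω : ℝ) : ‖1 + I * ω‖ = √(1 + ω ^ 2) := by
  simpa [mul_comm I] using norm_add_mul_I 1 ω

lemma norm_mul_exp_I_mul_ofReal_mul_ofReal (c : ℂ) (ω τ : ℝ) :
    ‖c * exp (I * ω * τ)‖ = ‖c‖ := by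
  rw [norm_mul, show I * ω * τ = ((ω * τ : ℝ) : ℂ) * I by push_cast; ring,
    norm_exp_ofReal_mul_I, mul_one]

lemma exists_nonneg_exp_ofReal_mul_I_eq {z : ℂ} (hz : ‖z‖ = 1) :
    ∃ t : ℝ, 0 ≤ t ∧ exp (t * I) = z := by
  refine ⟨arg z + 2 * Real.pi, by linarith [neg_pi_lt_arg z, Real.pi_pos], ?_⟩
  have hz' := norm_mul_exp_arg_mul_I z
  rw [hz, ofReal_one, one_mul] at hz'
  push_cast
  rw [add_mul, exp_add, hz', exp_two_pi_mul_I, mul_one]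

lemma exists_nonneg_mul_exp_I_mul_eq {c w : ℂ} (hc : c ≠ 0) (hw : ‖w‖ = ‖c‖) {ω : ℝ}
    (hω : 0 < ω) : ∃ τ : ℝ, 0 ≤ τ ∧ c * exp (I * ω * τ) = w := by
  obtain ⟨t, ht, hexp⟩ := exists_nonneg_exp_ofReal_mul_I_eq (z := w / c) <| by
    rw [norm_div, hw, div_self (norm_ne_zero_iff.mpr hc)]
  refine ⟨t / ω, div_nonneg ht hω.le, ?_⟩
  have hωt : I * ω * ((t / ω : ℝ) : ℂ) = t * I := by
    have : (ω : ℂ) ≠ 0 := ofReal_ne_zero.mpr hω.ne'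
    push_cast
    field_simp
  rw [hωt, hexp, mul_div_cancel₀ _ hc]

/-- The delayed characteristic equation `(λ+1)e^{λτ} = K` admits a purely imaginary
root `λ = iω` with `ω > 0` for some nonnegative delay `τ` if and only if `|K| > 1`. -/
theorem hopf_bifurcation_existence_iff
    (K : ℝ) :
    (∃ ω τ : ℝ, 0 < ω ∧ 0 ≤ τ ∧
      (1 + Complex.I * ω) * Complex.exp (Complex.I * ω * τ) = K) ↔ 1 < |K| := by
  constructor
  · rintro ⟨ω, τ, hω, -, heq⟩
    have hnorm := norm_mul_exp_I_mul_ofReal_mul_ofReal (1 + I * ω) ω τ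
    rw [heq, norm_real, Real.norm_eq_abs, norm_one_add_I_mul_ofReal] at hnorm
    rw [hnorm, Real.lt_sqrt zero_le_one, one_pow]
    exact lt_add_of_pos_right 1 (pow_pos hω 2)
  · intro hK
    have hK2 : 1 < K ^ 2 := (one_lt_sq_iff_one_lt_abs K).mpr hK
    set ω := √(K ^ 2 - 1)
    have hω : 0 < ω := Real.sqrt_pos.mpr (by linarith)
    have hnorm : ‖(K : ℂ)‖ = ‖1 + I * ω‖ := by
      rw [norm_one_add_I_mul_ofReal, Real.sq_sqrt (by linarith), add_sub_cancel,
        Real.sqrt_sq_eq_abs, norm_real, Real.norm_eq_abs]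
    have hc : 1 + I * ω ≠ 0 := fun h => by simpa using congrArg re h
    obtain ⟨τ, hτ, heq⟩ := exists_nonneg_mul_exp_I_mul_eq hc hnorm hω
    exact ⟨ω, τ, hω, hτ, heq⟩
end

section
/- Let K be a real number with |K| < 1 and let τ ≥ 0. Then every complex number λ satisfying (λ + 1) e^{λτ} = K has strictly negative real part. Hence for |K| < 1 the stationary pulse cannot be destabilized by any constant delay: all characteristic roots remain in the open left half-plane. -/
/-! On the closed right half-plane both factors of `(λ + 1) e^{λτ}` have modulus at least `1`,
so the left-hand side cannot take a value `K` with `|K| < 1`. -/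

namespace Complex

lemma one_le_norm_add_one_of_re_nonneg {z : ℂ} (hz : 0 ≤ z.re) : 1 ≤ ‖z + 1‖ :=
  calc (1 : ℝ) ≤ (z + 1).re := by rw [add_re, one_re]; linarith
    _ ≤ ‖z + 1‖ := re_le_norm _

lemma one_le_norm_exp_mul_ofReal {z : ℂ} (hz : 0 ≤ z.re) {τ : ℝ} (hτ : 0 ≤ τ) :
    1 ≤ ‖exp (z * τ)‖ := by
  rw [norm_exp, re_mul_ofReal]
  exact Real.one_le_exp (mul_nonneg hz hτ)

lemma one_le_norm_add_one_mul_exp {z : ℂ} (hz : 0 ≤ z.re) {τ : ℝ} (hτ : 0 ≤ τ) :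
    1 ≤ ‖(z + 1) * exp (z * τ)‖ := by
  rw [norm_mul]
  exact one_le_mul_of_one_le_of_one_le (one_le_norm_add_one_of_re_nonneg hz)
    (one_le_norm_exp_mul_ofReal hz hτ)

end Complex

/-- If `|K| < 1` and `τ ≥ 0`, every complex root `λ` of the delayed characteristic
equation `(λ+1)e^{λτ} = K` has strictly negative real part: for `|K| < 1` no constant
delay can destabilize the stationary pulse. -/
theorem characteristic_roots_stable_of_abs_lt_one
    (K : ℝ) (hK : |K| < 1) (τ : ℝ) (hτ : 0 ≤ τ) :
    ∀ lam : ℂ, (lam + 1) * Complex.exp (lam * τ) = K → lam.re < 0 := by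
  intro lam hroot
  by_contra! hre
  have hnorm := Complex.one_le_norm_add_one_mul_exp hre hτ
  rw [hroot, Complex.norm_real, Real.norm_eq_abs] at hnorm
  linarith
end
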